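/- arXiv:1602.00036 — 3 statements merged into one kernel-verified Lean document; each statement's English description precedes it below -/
import Mathlib

section
/- For any involution π of {0,...,n-1}, the operation x *_π y := x + y + (x + π(x))·(y + π(y)) (with coordinatewise addition and multiplication modulo 2, and π acting on vectors by permuting coordinates) makes {0,1}^n into an abelian group with identity the zero vector. -/
/-- The `Z₂Z₄` operation `x *_π y = x + y + (x + π(x))·(y + π(y))` on `(Z/2Z)^n`,
where the involution `π` acts on vectors by permuting coordinates
(`(π(x)) i = x (π⁻¹ i) = x (π i)` since `π` is an involution). -/
def star {n : ℕ} (π : Fin n → Fin n) (x y : Fin n → ZMod 2) : Fin n → ZMod 2 :=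
  x + y + (x + x ∘ π) * (y + y ∘ π)

lemma star_assoc_pt : ∀ a a' b b' c c' : ZMod 2,
    (a + b + (a + a') * (b + b')) + c +
      ((a + b + (a + a') * (b + b')) + (a' + b' + (a' + a) * (b' + b))) * (c + c') =
    a + (b + c + (b + b') * (c + c')) +
      (a + a') * ((b + c + (b + b') * (c + c')) + (b' + c' + (b' + b) * (c' + c))) := by
  decide

lemma star_inv_pt : ∀ a a' : ZMod 2, a + a' + (a + a') * (a' + a) = 0 := by decide

/-- for any involution `π`, `*_π` makes `{0,1}^n` an abelian group
with identity the zero vector. -/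
theorem star_comm_group {n : ℕ} (π : Fin n → Fin n) (hπ : Function.Involutive π) :
    (∀ x y z : Fin n → ZMod 2, star π (star π x y) z = star π x (star π y z)) ∧
    (∀ x y : Fin n → ZMod 2, star π x y = star π y x) ∧
    (∀ x : Fin n → ZMod 2, star π x 0 = x) ∧
    (∀ x : Fin n → ZMod 2, star π 0 x = x) ∧
    (∀ x : Fin n → ZMod 2, ∃ y : Fin n → ZMod 2, star π x y = 0) := by
  refine ⟨?_, ?_, ?_, ?_, ?_⟩
  · intro x y z
    funext i
    simp only [_root_.star, Pi.add_apply, Pi.mul_apply, Function.comp_apply, hπ i]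
    exact star_assoc_pt (x i) (x (π i)) (y i) (y (π i)) (z i) (z (π i))
  · intro x y
    funext i
    simp only [_root_.star, Pi.add_apply, Pi.mul_apply, Function.comp_apply]
    ring
  · intro x
    funext i
    simp [_root_.star]
  · intro x
    funext i
    simp [_root_.star]
  · intro x
    refine ⟨x ∘ π, ?_⟩
    funext i
    simp only [_root_.star, Pi.add_apply, Pi.mul_apply, Function.comp_apply, Pi.zero_apply, hπ i]
    exact star_inv_pt (x i) (x (π i))
end

section
/- For any involution π of {0,...,n-1} with exactly α fixed points (so n - α is even and β = (n-α)/2), the group ({0,1}^n, *_π) is isomorphic to Z_2^α × Z_4^β. -/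
/-- Encode a pair `(a,b) ∈ (Z/2)²` as an element of `Z/4`. -/
def phi (a b : ZMod 2) : ZMod 4 := ((a + b).val : ZMod 4) + 2 * (b.val : ZMod 4)

def psi1 (c : ZMod 4) : ZMod 2 := ((c.val % 2 + c.val / 2 : ℕ) : ZMod 2)

def psi2 (c : ZMod 4) : ZMod 2 := ((c.val / 2 : ℕ) : ZMod 2)

lemma psi1_phi : ∀ a b : ZMod 2, psi1 (phi a b) = a := by decide

lemma psi2_phi : ∀ a b : ZMod 2, psi2 (phi a b) = b := by decide

lemma phi_psi : ∀ c : ZMod 4, phi (psi1 c) (psi2 c) = c := by decide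

lemma phi_add : ∀ a b c d : ZMod 2,
    phi (a + c + (a + b) * (c + d)) (b + d + (b + a) * (d + c)) = phi a b + phi c d := by
  decide

lemma fixed_add : ∀ a c : ZMod 2, a + c + (a + a) * (c + c) = a + c := by decide

/-- if the involution `π` has exactly `α` fixed points and
`β = (n - α)/2` (i.e. `n = α + 2β`), then `({0,1}^n, *_π)` is isomorphic to
`Z₂^α × Z₄^β`. -/
theorem star_group_iso_Z2Z4 {n : ℕ} (π : Fin n → Fin n) (hπ : Function.Involutive π)
    (α β : ℕ) (hα : α = (Finset.univ.filter fun i : Fin n => π i = i).card)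
    (hβ : n = α + 2 * β) :
    ∃ f : (Fin n → ZMod 2) → (Fin α → ZMod 2) × (Fin β → ZMod 4),
      Function.Bijective f ∧ ∀ x y, f (star π x y) = f x + f y := by
  classical
  -- cardinality of fixed points
  have hcardF : Fintype.card {i : Fin n // π i = i} = α := by
    rw [Fintype.card_subtype]; exact hα.symm
  -- cardinality of "lower half" of the pairs
  have hAB : (Finset.univ.filter fun i : Fin n => i < π i).card
      = (Finset.univ.filter fun i : Fin n => π i < i).card := by
    apply Finset.card_bij (fun i _ => π i)
    · intro a ha
      simp only [Finset.mem_filter, Finset.mem_univ, true_and] at ha ⊢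
      rw [hπ a]; exact ha
    · intro a ha b hb hab
      exact hπ.injective hab
    · intro b hb
      simp only [Finset.mem_filter, Finset.mem_univ, true_and] at hb
      exact ⟨π b, by simp only [Finset.mem_filter, Finset.mem_univ, true_and, hπ b]; exact hb,
        hπ b⟩
  have hsplit : (Finset.univ.filter fun i : Fin n => π i = i).card
      + ((Finset.univ.filter fun i : Fin n => i < π i).card
        + (Finset.univ.filter fun i : Fin n => π i < i).card) = n := by
    have h1 : (Finset.univ.filter fun i : Fin n => ¬ π i = i)
        = (Finset.univ.filter fun i : Fin n => i < π i)
          ∪ (Finset.univ.filter fun i : Fin n => π i < i) := by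
      ext i
      simp only [Finset.mem_filter, Finset.mem_univ, true_and, Finset.mem_union]
      constructor
      · intro h; exact lt_or_gt_of_ne fun h' => h h'.symm
      · rintro (h | h)
        · exact fun h' => by rw [h'] at h; exact lt_irrefl _ h
        · exact fun h' => by rw [h'] at h; exact lt_irrefl _ h
    have h2 : Disjoint (Finset.univ.filter fun i : Fin n => i < π i)
        (Finset.univ.filter fun i : Fin n => π i < i) := by
      rw [Finset.disjoint_left]
      intro i hi hi'
      simp only [Finset.mem_filter, Finset.mem_univ, true_and] at hi hi'
      exact absurd (hi.trans hi') (lt_irrefl i)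
    have := Finset.card_filter_add_card_filter_not
      (s := (Finset.univ : Finset (Fin n))) (p := fun i => π i = i)
    rw [h1, Finset.card_union_of_disjoint h2] at this
    simpa using this
  have hcardQ : Fintype.card {i : Fin n // i < π i} = β := by
    rw [Fintype.card_subtype]
    omega
  obtain ⟨eF⟩ := Fintype.truncEquivFinOfCardEq hcardF
  obtain ⟨eQ⟩ := Fintype.truncEquivFinOfCardEq hcardQ
  -- the map
  refine ⟨fun x => (fun k => x (eF.symm k).1,
      fun k => phi (x (eQ.symm k).1) (x (π (eQ.symm k).1))), ?_, ?_⟩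
  · rw [Function.bijective_iff_has_inverse]
    refine ⟨fun p i =>
      if h : π i = i then p.1 (eF ⟨i, h⟩)
      else if h2 : i < π i then psi1 (p.2 (eQ ⟨i, h2⟩))
      else psi2 (p.2 (eQ ⟨π i, by rw [hπ i]; exact lt_of_le_of_ne (not_lt.mp h2) h⟩)),
      ?_, ?_⟩
    · intro x
      funext i
      by_cases h : π i = i
      · simp only [dif_pos h, Equiv.symm_apply_apply]
      · by_cases h2 : i < π i
        · simp only [dif_neg h, dif_pos h2, Equiv.symm_apply_apply, psi1_phi]
        · simp only [dif_neg h, dif_neg h2, Equiv.symm_apply_apply, psi2_phi, hπ i]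
    · intro p
      refine Prod.ext ?_ ?_
      · funext k
        simp only
        rw [dif_pos (eF.symm k).2]
        rw [show (⟨(eF.symm k).1, (eF.symm k).2⟩ : {i : Fin n // π i = i}) = eF.symm k from
          Subtype.ext rfl, Equiv.apply_symm_apply]
      · funext k
        simp only
        have hlt : (eQ.symm k).1 < π (eQ.symm k).1 := (eQ.symm k).2
        rw [dif_neg (ne_of_gt hlt), dif_pos hlt]
        have hne2 : ¬ π (π (eQ.symm k).1) = π (eQ.symm k).1 := by
          rw [hπ]; exact ne_of_lt hlt
        have hnlt2 : ¬ π (eQ.symm k).1 < π (π (eQ.symm k).1) := by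
          rw [hπ]; exact not_lt.mpr (le_of_lt hlt)
        rw [dif_neg hne2, dif_neg hnlt2]
        have key : ∀ (pf : π (π (eQ.symm k).1) < π (π (π (eQ.symm k).1))),
            (⟨π (π (eQ.symm k).1), pf⟩ : {i : Fin n // i < π i}) = eQ.symm k :=
          fun pf => Subtype.ext (by simp [hπ (eQ.symm k).1])
        simp only [key]
        rw [show (⟨(eQ.symm k).1, hlt⟩ : {i : Fin n // i < π i}) = eQ.symm k from
          Subtype.ext rfl]
        rw [Equiv.apply_symm_apply, phi_psi]
  · intro x y
    refine Prod.ext ?_ ?_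
    · funext k
      have h := (eF.symm k).2
      show _root_.star π x y (eF.symm k).1 = x (eF.symm k).1 + y (eF.symm k).1
      simp only [_root_.star, Pi.add_apply, Pi.mul_apply, Function.comp_apply, h, fixed_add]
    · funext k
      have h := hπ (eQ.symm k).1
      show phi (_root_.star π x y (eQ.symm k).1) (_root_.star π x y (π (eQ.symm k).1))
        = phi (x (eQ.symm k).1) (x (π (eQ.symm k).1))
          + phi (y (eQ.symm k).1) (y (π (eQ.symm k).1))
      simp only [_root_.star, Pi.add_apply, Pi.mul_apply, Function.comp_apply, h]
      exact phi_add _ _ _ _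
end

section
/- A permutation σ of {0,...,n-1} commutes with the involution π if and only if the induced map on {0,1}^n is an automorphism of the group ({0,1}^n, *_π), i.e., σ(x) *_π σ(y) = σ(x *_π y) for all x, y ∈ {0,1}^n. -/
/-- Action of a permutation `σ` of coordinates on vectors: `σ(x)ᵢ = x_{σ⁻¹(i)}`. -/
def act {n : ℕ} (σ : Equiv.Perm (Fin n)) (x : Fin n → ZMod 2) : Fin n → ZMod 2 :=
  x ∘ σ.symm

/-- a permutation `σ` commutes with the involution `π` iff the
induced map on `{0,1}^n` is an automorphism of the group `({0,1}^n, *_π)`. -/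
theorem commutes_iff_group_automorphism {n : ℕ} (hn : 1 ≤ n)
    (σ : Equiv.Perm (Fin n)) (π : Fin n → Fin n) (hπ : Function.Involutive π) :
    (∀ i, σ (π i) = π (σ i)) ↔
      ∀ x y : Fin n → ZMod 2, act σ (star π x y) = star π (act σ x) (act σ y) := by
  constructor
  · intro h x y
    have hkey : ∀ i, π (σ.symm i) = σ.symm (π i) := by
      intro i
      have := h (σ.symm i)
      have h2 : σ (π (σ.symm i)) = π i := by simpa using this
      calc π (σ.symm i) = σ.symm (σ (π (σ.symm i))) := by simp
        _ = σ.symm (π i) := by rw [h2]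
    funext i
    unfold _root_.star act
    simp only [Function.comp, Pi.add_apply, Pi.mul_apply]
    rw [hkey]
  · intro h
    have hkey : ∀ i, σ.symm (π i) = π (σ.symm i) := by
      intro i
      set a := π (σ.symm i) with ha
      set x : Fin n → ZMod 2 := fun k => if k = a then 1 else 0 with hx
      have hthis := congrFun (h x x) i
      unfold _root_.star act at hthis
      simp only [Function.comp, Pi.add_apply, Pi.mul_apply] at hthis
      by_contra hne
      have h1 : x (π (σ.symm i)) = 1 := by simp [hx, ha]
      have h0 : x (σ.symm (π i)) = 0 := by simp [hx, hne]
      rw [h1, h0] at hthis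
      have : ∀ c : ZMod 2, ¬ (c + c + (c + 1) * (c + 1) = c + c + (c + 0) * (c + 0)) := by
        decide
      exact this _ hthis
    intro i
    have := hkey (σ i)
    simp only [Equiv.symm_apply_apply] at this
    rw [← this]
    simp
end
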